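/- arXiv:0902.2195 — 2 statements merged into one kernel-verified Lean document; each statement's English description precedes it below -/
import Mathlib

section
/- For every integer n, the following identities hold in ℤ[u]: (i) 2 - u = g_{n+1}² + g_n² - u·g_n·g_{n+1}; (ii) (4 - u²)·G_n = (2n+1)·g_n² + (2n-1)·g_{n+1}² - 2n·u·g_n·g_{n+1}; (iii) (4 - u²)·G_n = g_n² - g_{n+1}² - 2n·(u - 2); (iv) (u² - 4)·F_n = f_{n+1}² - f_n² - (2n + 1). -/
open Polynomial

/-!
Every solution of `a (j + 1) = x * a j - a (j - 1)` keeps the quadratic form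
`a (n + 1) ^ 2 + a n ^ 2 - x * a n * a (n + 1)` constant, which gives (i). For polynomial
solutions with `x = X`, the Wronskian `W n` of `a n` and `a (n + 1)` grows by `a (n + 1) ^ 2`
at each step, and together with the invariant this makes
`(X ^ 2 - 4) * W n - (a (n + 1) ^ 2 - a n ^ 2)` an arithmetic progression in `n`; evaluating
its initial term for `f` and `g` gives (iii) and (iv), and (ii) is (iii) plus `2 n` times (i).
-/

theorem Int.apply_eq_apply_zero_of_forall_add_one {α : Type*} {s : ℤ → α}
    (h : ∀ n, s (n + 1) = s n) (n : ℤ) : s n = s 0 := by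
  simpa using (Function.Periodic.int_mul h n) 0

section Recurrence

variable {R : Type*} [CommRing R] {x : R} {a b : ℤ → R}

def IsChebyshevRec (x : R) (a : ℤ → R) : Prop :=
  ∀ j, a (j + 1) = x * a j - a (j - 1)

def chebyshevInvariant (x : R) (a : ℤ → R) (n : ℤ) : R :=
  a (n + 1) ^ 2 + a n ^ 2 - x * a n * a (n + 1)

namespace IsChebyshevRec

theorem add_two (h : IsChebyshevRec x a) (n : ℤ) : a (n + 2) = x * a (n + 1) - a n := by
  simpa only [add_assoc, one_add_one_eq_two, add_sub_cancel_right] using h (n + 1)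

theorem shift (h : IsChebyshevRec x a) (k : ℤ) : IsChebyshevRec x (fun j ↦ a (j - k)) := by
  intro j
  simpa only [sub_add_eq_add_sub, sub_right_comm _ (1 : ℤ)] using h (j - k)

theorem sub (ha : IsChebyshevRec x a) (hb : IsChebyshevRec x b) :
    IsChebyshevRec x (fun j ↦ a j - b j) := by
  intro j
  simp only [ha j, hb j]
  ring

theorem chebyshevInvariant_eq (h : IsChebyshevRec x a) (n : ℤ) :
    chebyshevInvariant x a n = chebyshevInvariant x a 0 := by
  refine Int.apply_eq_apply_zero_of_forall_add_one (fun m ↦ ?_) n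
  simp only [chebyshevInvariant, add_assoc, one_add_one_eq_two, h.add_two m]
  ring

end IsChebyshevRec

end Recurrence

section Wronskian

variable {R : Type*} [CommRing R] {a : ℤ → R[X]}

namespace IsChebyshevRec

theorem wronskian_add_one (h : IsChebyshevRec X a) (n : ℤ) :
    wronskian (a (n + 1)) (a (n + 1 + 1)) = a (n + 1) ^ 2 + wronskian (a n) (a (n + 1)) := by
  rw [add_assoc, one_add_one_eq_two, h.add_two n]
  simp only [wronskian, derivative_sub, derivative_mul, derivative_X, one_mul]
  ring

theorem wronskian_mul_eq (h : IsChebyshevRec X a) (n : ℤ) :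
    (X ^ 2 - 4) * wronskian (a n) (a (n + 1)) = a (n + 1) ^ 2 - a n ^ 2
      - 2 * (n : R[X]) * chebyshevInvariant X a 0
      + ((X ^ 2 - 4) * wronskian (a 0) (a 1) - (a 1 ^ 2 - a 0 ^ 2)) := by
  set s : ℤ → R[X] := fun n ↦ (X ^ 2 - 4) * wronskian (a n) (a (n + 1))
    - (a (n + 1) ^ 2 - a n ^ 2) + 2 * (n : R[X]) * chebyshevInvariant X a 0 with hs
  have hstep : ∀ m, s (m + 1) = s m := by
    intro m
    have hW := h.wronskian_add_one m
    have hinv : chebyshevInvariant X a 0 = a (m + 1) ^ 2 + a m ^ 2 - X * a m * a (m + 1) :=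
      (h.chebyshevInvariant_eq m).symm
    have hrec := h.add_two m
    simp only [hs, add_assoc, one_add_one_eq_two] at hW ⊢
    push_cast
    linear_combination (X ^ 2 - 4) * hW + 2 * hinv - (a (m + 2) + X * a (m + 1) - a m) * hrec
  have hsn := Int.apply_eq_apply_zero_of_forall_add_one hstep n
  simp only [hs, zero_add, Int.cast_zero, mul_zero] at hsn
  linear_combination hsn

end IsChebyshevRec

end Wronskian

/-- the four identities of Lemma `lemmirrednewids` in `ℤ[u]`. -/
theorem stmt14 (f : ℤ → Polynomial ℤ)
    (hf0 : f 0 = 0) (hf1 : f 1 = 1)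
    (hrec : ∀ j : ℤ, f (j + 1) = X * f j - f (j - 1))
    (g : ℤ → Polynomial ℤ) (hg : ∀ j : ℤ, g j = f j - f (j - 1))
    (F G : ℤ → Polynomial ℤ)
    (hF : ∀ n : ℤ, F n = derivative (f (n + 1)) * f n - f (n + 1) * derivative (f n))
    (hG : ∀ n : ℤ, G n = derivative (g (n + 1)) * g n - g (n + 1) * derivative (g n))
    (n : ℤ) :
    (2 - X : Polynomial ℤ) = g (n + 1) ^ 2 + g n ^ 2 - X * g n * g (n + 1) ∧
    (4 - X ^ 2) * G n
      = C (2 * n + 1) * g n ^ 2 + C (2 * n - 1) * g (n + 1) ^ 2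
        - C (2 * n) * X * g n * g (n + 1) ∧
    (4 - X ^ 2) * G n = g n ^ 2 - g (n + 1) ^ 2 - C (2 * n) * (X - 2) ∧
    (X ^ 2 - 4) * F n = f (n + 1) ^ 2 - f n ^ 2 - C (2 * n + 1) := by
  have hfm1 : f (-1) = -1 := by
    have h := hrec 0
    rw [zero_add, zero_sub, hf0, hf1] at h
    linear_combination h
  have hfrec : IsChebyshevRec X f := hrec
  have hgrec : IsChebyshevRec X g := funext hg ▸ hfrec.sub (hfrec.shift 1)
  have hg0 : g 0 = 1 := by rw [hg, zero_sub, hf0, hfm1, zero_sub, neg_neg]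
  have hg1 : g 1 = 1 := by rw [hg, sub_self, hf0, hf1, sub_zero]
  have hi : (2 - X : ℤ[X]) = g (n + 1) ^ 2 + g n ^ 2 - X * g n * g (n + 1) := by
    rw [← chebyshevInvariant, hgrec.chebyshevInvariant_eq, chebyshevInvariant,
      zero_add, hg0, hg1]
    ring
  have hiii := hgrec.wronskian_mul_eq n
  have hiv := hfrec.wronskian_mul_eq n
  simp only [chebyshevInvariant, zero_add, hg0, hg1, hf0, hf1, wronskian, derivative_one,
    derivative_zero] at hiii hiv
  have hC : ∀ m : ℤ, (C m : ℤ[X]) = m := fun m ↦ eq_intCast C m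
  simp only [hF, hG, hC]
  push_cast
  refine ⟨hi, ?_, ?_, ?_⟩
  · linear_combination -hiii + 2 * (n : ℤ[X]) * hi
  · linear_combination -hiii
  · linear_combination hiv
end

section
/- For every integer n, the identity (1/2)·(u - 2)·(u + 2)²·H_n = (n-1)·f_{2n+1} + f_{2n} - (n+1)·f_{2n-1} - n·u + 2n holds in ℚ[u], where H_n = g_{n+1}''·g_n - g_{n+1}·g_n''. -/
open Polynomial

/-!
Let `W m` be the Wronskian of `g m` and `g (m + 1)`, so that `H m = (W m)'`. The recurrence gives
`W (m + 1) = W m + g (m + 1) ^ 2`, while the doubling formula `f (2m) = f m (f (m+1) - f (m-1))`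
and Cassini's identity give `(u + 2) g (m + 1) ^ 2 = f (2m + 2) - f (2m) + 2`. Hence
`(u + 2) W m = f (2m) + 2m` for all `m`. Differentiating this and eliminating `f (2n)'` with
`(u² - 4) f m' = m (f (m+1) - f (m-1)) - u f m` gives the identity.
-/

-- The recurrence of the Lucas sequences `U(x, 1)` and `V(x, 1)`; the `f` of the theorem is
-- `U(u, 1)`, i.e. `f j = Chebyshev.S ℚ (j - 1)`.
def LucasRec {A : Type*} [Ring A] (x : A) (a : ℤ → A) : Prop :=
  ∀ j, a (j + 1) = x * a j - a (j - 1)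

theorem Int.apply_eq_apply_zero_of_add_one {α : Sort*} {c : ℤ → α}
    (h : ∀ m, c (m + 1) = c m) (m : ℤ) : c m = c 0 := by
  induction m using Int.induction_on with
  | zero => rfl
  | succ k ih => rw [h, ih]
  | pred k ih => rw [← h, sub_add_cancel, ih]

namespace LucasRec

section Ring

variable {A : Type*} [Ring A] {x : A} {a b : ℤ → A}

theorem sub_one (ha : LucasRec x a) (j : ℤ) : a (j - 1) = x * a j - a (j + 1) := by
  rw [ha j]; abel

theorem eq_zero (ha : LucasRec x a) (h0 : a 0 = 0) (h1 : a 1 = 0) (j : ℤ) : a j = 0 := by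
  have h : ∀ j, a j = 0 ∧ a (j + 1) = 0 := by
    intro j
    induction j using Int.induction_on with
    | zero => exact ⟨h0, h1⟩
    | succ k ih =>
      exact ⟨ih.2, by rw [ha, add_sub_cancel_right, ih.1, ih.2, mul_zero, sub_zero]⟩
    | pred k ih =>
      exact ⟨by rw [ha.sub_one, ih.1, ih.2, mul_zero, sub_zero], by rw [sub_add_cancel, ih.1]⟩
  exact (h j).1

theorem sub (ha : LucasRec x a) (hb : LucasRec x b) : LucasRec x (a - b) := fun j => by
  simp only [Pi.sub_apply, ha j, hb j]; noncomm_ring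

theorem sub_sub_one (ha : LucasRec x a) : LucasRec x fun j => a j - a (j - 1) := fun j => by
  simp only [add_sub_cancel_right, ha j, ha.sub_one (j - 1), sub_add_cancel]; noncomm_ring

theorem ext (ha : LucasRec x a) (hb : LucasRec x b) (h0 : a 0 = b 0) (h1 : a 1 = b 1) :
    a = b :=
  funext fun j => sub_eq_zero.1 <|
    (ha.sub hb).eq_zero (sub_eq_zero.2 h0) (sub_eq_zero.2 h1) j

end Ring

section CommRing

variable {A : Type*} [CommRing A] {x : A} {a : ℤ → A}

theorem apply_neg_one (ha : LucasRec x a) (h0 : a 0 = 0) (h1 : a 1 = 1) : a (-1) = -1 := by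
  simpa [h0, h1] using ha.sub_one 0

theorem apply_two (ha : LucasRec x a) (h0 : a 0 = 0) (h1 : a 1 = 1) : a 2 = x := by
  simpa [h0, h1] using ha 1

theorem sq_sub_mul (ha : LucasRec x a) (m : ℤ) :
    a m ^ 2 - a (m + 1) * a (m - 1) = a 0 ^ 2 - a 1 * a (-1) := by
  refine Int.apply_eq_apply_zero_of_add_one
    (c := fun m => a m ^ 2 - a (m + 1) * a (m - 1)) (fun m => ?_) m
  rw [ha (m + 1), add_sub_cancel_right, ha.sub_one m]
  ring

theorem sq_sub_mul_eq_one (ha : LucasRec x a) (h0 : a 0 = 0) (h1 : a 1 = 1) (m : ℤ) :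
    a m ^ 2 - a (m + 1) * a (m - 1) = 1 := by
  rw [ha.sq_sub_mul, h0, h1, ha.apply_neg_one h0 h1]; ring

theorem apply_add (ha : LucasRec x a) (h0 : a 0 = 0) (h1 : a 1 = 1) (m n : ℤ) :
    a (m + n) = a m * a (n + 1) - a (m - 1) * a n := by
  have shifted : LucasRec x fun n => a (m + n) := fun j => by
    dsimp only
    rw [← add_assoc, ha, add_sub_assoc]
  have combined : LucasRec x fun n => a m * a (n + 1) - a (m - 1) * a n := fun j => by
    dsimp only
    rw [ha (j + 1), add_sub_cancel_right, sub_add_cancel, ha j]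
    ring
  refine congrFun (shifted.ext combined ?_ ?_) n
  · simp [h0, h1]
  · simp [ha m, ha.apply_two h0 h1, h1, mul_comm]

theorem apply_two_mul (ha : LucasRec x a) (h0 : a 0 = 0) (h1 : a 1 = 1) (m : ℤ) :
    a (2 * m) = a m * (a (m + 1) - a (m - 1)) := by
  rw [two_mul, ha.apply_add h0 h1]; ring

end CommRing

end LucasRec

namespace Polynomial

variable {R : Type*} [CommRing R]

theorem derivative_wronskian (a b : R[X]) :
    derivative (wronskian a b) = a * derivative (derivative b) - derivative (derivative a) * b := by
  simp only [wronskian, derivative_sub, derivative_mul]; ring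

end Polynomial

namespace LucasRec

variable {R : Type*} [CommRing R] {f g : ℤ → R[X]}

theorem derivative_add_one (hf : LucasRec X f) (j : ℤ) :
    derivative (f (j + 1)) = X * derivative (f j) - derivative (f (j - 1)) + f j := by
  rw [hf j]; simp only [derivative_sub, derivative_mul, derivative_X, one_mul]; ring

theorem wronskian_add_one (hg : LucasRec X g) (m : ℤ) :
    wronskian (g (m + 1)) (g (m + 1 + 1)) = wronskian (g m) (g (m + 1)) + g (m + 1) ^ 2 := by
  rw [hg (m + 1), add_sub_cancel_right]
  simp only [wronskian, derivative_sub, derivative_mul, derivative_X, one_mul]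
  ring

theorem X_sq_sub_four_mul_derivative (hf : LucasRec X f) (hf0 : f 0 = 0) (hf1 : f 1 = 1)
    (m : ℤ) :
    (X ^ 2 - 4) * derivative (f m) = (m : R[X]) * (f (m + 1) - f (m - 1)) - X * f m := by
  set D : ℤ → R[X] := fun m =>
    (X ^ 2 - 4) * derivative (f m) - ((m : R[X]) * (f (m + 1) - f (m - 1)) - X * f m)
  have hD : LucasRec X D := fun j => by
    have hup := hf (j + 1)
    have hdown := hf (j - 1)
    simp only [D, add_sub_cancel_right, sub_add_cancel] at hup hdown ⊢
    push_cast
    linear_combination (X ^ 2 - 4) * hf.derivative_add_one j - ((j : R[X]) + 1) * hup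
      + ((j : R[X]) - 1) * hdown
  have hf2 := hf.apply_two hf0 hf1
  refine sub_eq_zero.1 (hD.eq_zero ?_ ?_ m) <;> simp [D, hf0, hf1, hf2]

theorem add_two_mul_sq (hf : LucasRec X f) (hf0 : f 0 = 0) (hf1 : f 1 = 1)
    (hg : ∀ j, g j = f j - f (j - 1)) (m : ℤ) :
    (X + 2) * g (m + 1) ^ 2 = f (2 * (m + 1)) - f (2 * m) + 2 := by
  rw [hg, hf.apply_two_mul hf0 hf1, hf.apply_two_mul hf0 hf1, add_sub_cancel_right,
    hf (m + 1), add_sub_cancel_right]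
  linear_combination 2 * hf.sq_sub_mul_eq_one hf0 hf1 m + (2 * f (m + 1) - f m) * hf.sub_one m

theorem add_two_mul_wronskian (hf : LucasRec X f) (hf0 : f 0 = 0) (hf1 : f 1 = 1)
    (hg : ∀ j, g j = f j - f (j - 1)) (m : ℤ) :
    (X + 2) * wronskian (g m) (g (m + 1)) = f (2 * m) + 2 * (m : R[X]) := by
  have hgrec : LucasRec X g := funext hg ▸ hf.sub_sub_one
  suffices h : (X + 2) * wronskian (g m) (g (m + 1)) - f (2 * m) - 2 * (m : R[X]) = 0 by
    linear_combination h
  refine (Int.apply_eq_apply_zero_of_add_one (fun m => ?_) m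
    (c := fun m => (X + 2) * wronskian (g m) (g (m + 1)) - f (2 * m) - 2 * (m : R[X]))).trans ?_
  · rw [hgrec.wronskian_add_one]
    push_cast
    linear_combination add_two_mul_sq hf hf0 hf1 hg m
  · simp [hg, hf0, hf1, hf.apply_neg_one hf0 hf1, wronskian_self_eq_zero]

theorem X_sub_two_mul_X_add_two_sq_mul_derivative_wronskian (hf : LucasRec X f) (hf0 : f 0 = 0)
    (hf1 : f 1 = 1) (hg : ∀ j, g j = f j - f (j - 1)) (n : ℤ) :
    (X - 2) * (X + 2) ^ 2 * derivative (wronskian (g n) (g (n + 1)))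
      = 2 * (((n : R[X]) - 1) * f (2 * n + 1) + f (2 * n) - ((n : R[X]) + 1) * f (2 * n - 1)
        - (n : R[X]) * X + 2 * (n : R[X])) := by
  have hW := add_two_mul_wronskian hf hf0 hf1 hg n
  have hW' := congrArg derivative hW
  simp only [derivative_mul, derivative_add, derivative_X, derivative_ofNat, derivative_intCast,
    one_mul, mul_zero, zero_mul, add_zero] at hW'
  have hD := hf.X_sq_sub_four_mul_derivative hf0 hf1 (2 * n)
  push_cast at hD
  linear_combination (X - 2) * (X + 2) * hW' - (X - 2) * hW + hD + 2 * hf (2 * n)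

end LucasRec

/-- in `ℚ[u]`,
`(1/2)(u-2)(u+2)² H n = (n-1) f (2n+1) + f (2n) - (n+1) f (2n-1) - n u + 2n`,
where `H n = g (n+1)'' · g n - g (n+1) · g n''`. -/
theorem stmt19 (f : ℤ → Polynomial ℚ)
    (hf0 : f 0 = 0) (hf1 : f 1 = 1)
    (hrec : ∀ j : ℤ, f (j + 1) = X * f j - f (j - 1))
    (g : ℤ → Polynomial ℚ) (hg : ∀ j : ℤ, g j = f j - f (j - 1))
    (H : ℤ → Polynomial ℚ)
    (hH : ∀ m : ℤ, H m = derivative (derivative (g (m + 1))) * g m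
        - g (m + 1) * derivative (derivative (g m)))
    (n : ℤ) :
    C (1 / 2 : ℚ) * (X - 2) * (X + 2) ^ 2 * H n
      = C ((n : ℚ) - 1) * f (2 * n + 1) + f (2 * n) - C ((n : ℚ) + 1) * f (2 * n - 1)
        - C (n : ℚ) * X + C (2 * (n : ℚ)) := by
  have key := LucasRec.X_sub_two_mul_X_add_two_sq_mul_derivative_wronskian hrec hf0 hf1 hg n
  have half : C (1 / 2 : ℚ) * 2 = 1 := by rw [← C_ofNat, ← C_mul]; norm_num
  have hHn : H n = derivative (wronskian (g n) (g (n + 1))) := by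
    rw [hH n, derivative_wronskian]; ring
  rw [← hHn] at key
  refine mul_left_cancel₀ (two_ne_zero : (2 : ℚ[X]) ≠ 0) ?_
  simp only [map_sub, map_add, map_one, map_mul, map_ofNat, map_intCast]
  linear_combination key + (X - 2) * (X + 2) ^ 2 * H n * half
end
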